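/- arXiv:2502.21136 — 4 statements merged into one kernel-verified Lean document; each statement's English description precedes it below -/
import Mathlib

section
/- If r is the Gauss remainder of nonzero a, b ∈ ℤ[i], then ℓ₁(r) ≤ ℓ∞(b) and ℓ∞(r) ≤ ℓ₁(b)/2. -/
open GaussianInt

noncomputable section

/-- The sequence w: w_{2k} = 3·2^k, w_{2k+1} = 4·2^k. -/
def w (n : ℕ) : ℤ := if n % 2 = 0 then 3 * 2 ^ (n / 2) else 4 * 2 ^ (n / 2)

/-- 2-adic valuation of gcd(Re z, Im z). -/
def v2 (z : GaussianInt) : ℕ := padicValNat 2 (Int.gcd z.re z.im)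

/-- ℓ₁ norm. -/
def l1 (z : GaussianInt) : ℤ := |z.re| + |z.im|

/-- ℓ∞ norm. -/
def linf (z : GaussianInt) : ℤ := max |z.re| |z.im|

/-- m(z) = min(|Re z|, |Im z|). -/
def mm (z : GaussianInt) : ℤ := min |z.re| |z.im|

/-- The algebraic norm. -/
def Nm (z : GaussianInt) : ℤ := z.re ^ 2 + z.im ^ 2

/-- Graves' formula for the minimal Euclidean function φ on ℤ[i]. -/
def phi (z : GaussianInt) : ℕ :=
  let j := v2 z
  let n := sInf {n : ℕ | |z.re| ≤ 2 ^ j * (w n - 2) ∧ |z.im| ≤ 2 ^ j * (w n - 2)}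
  if l1 z ≤ 2 ^ j * (w (n + 1) - 3) then n + 2 * j else n + 2 * j + 1

/-- Nearest integer, rounding halves down. -/
def nint (x : ℚ) : ℤ := if x - ⌊x⌋ ≤ 1 / 2 then ⌊x⌋ else ⌈x⌉

/-- Gauss quotient: coordinatewise nearest-integer rounding of a·conj(b)/Nm(b). -/
def gq (a b : GaussianInt) : GaussianInt :=
  ⟨nint (((a.re * b.re + a.im * b.im : ℤ) : ℚ) / ((b.re ^ 2 + b.im ^ 2 : ℤ) : ℚ)),
   nint (((a.im * b.re - a.re * b.im : ℤ) : ℚ) / ((b.re ^ 2 + b.im ^ 2 : ℤ) : ℚ))⟩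

/-- Gauss remainder. -/
def gr (a b : GaussianInt) : GaussianInt := a - gq a b * b

/-- The imaginary unit in ℤ[i]. -/
def Ii : GaussianInt := ⟨0, 1⟩

/-- The canonical unit u_z. -/
def uz (z : GaussianInt) : GaussianInt :=
  if |z.re| > |z.im| then (if 0 < z.re then 1 else -1)
  else if |z.im| > |z.re| then (if 0 < z.im then -Ii else Ii)
  else if 0 < z.re then (if 0 < z.im then 1 else Ii)
  else (if 0 < z.im then -Ii else -1)

/-- s(z) = sgn(Im(u_z·z)). -/
def sfun (z : GaussianInt) : ℤ := Int.sign ((uz z * z).im)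

/-!
Put `e = a·conj b - q·Nm b` with `q` the Gauss quotient. Rounding each coordinate of
`a·conj b / Nm b` to the nearest integer gives `2 ℓ∞(e) ≤ Nm b`, and `Nm b · r = e · b`.
Both bounds then follow from `ℓ∞(e z) ≤ ℓ∞(e) ℓ₁(z)` and its dual `ℓ₁(e z) ≤ 2 ℓ∞(e) ℓ∞(z)`;
the dual comes for free because multiplication by `1 + i` turns `ℓ₁` into `ℓ∞`
and `ℓ∞` into `ℓ₁ / 2`.
-/

lemma abs_sub_nint_le (x : ℚ) : |x - nint x| ≤ 1 / 2 := by
  unfold nint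
  split_ifs with h
  · rw [abs_le]
    exact ⟨by linarith [Int.floor_le x], by linarith⟩
  · have hceil : (⌈x⌉ : ℚ) ≤ ⌊x⌋ + 1 := mod_cast Int.ceil_le_floor_add_one x
    rw [abs_le]
    exact ⟨by linarith, by linarith [Int.le_ceil x]⟩

lemma two_mul_abs_sub_nint_div_mul_le (A N : ℤ) (hN : 0 < N) :
    2 * |A - nint ((A : ℚ) / N) * N| ≤ N := by
  have hNq : (0 : ℚ) < N := mod_cast hN
  have key : (A : ℚ) - nint ((A : ℚ) / N) * N = ((A : ℚ) / N - nint ((A : ℚ) / N)) * N := by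
    field_simp
  have hq : 2 * |(A : ℚ) - nint ((A : ℚ) / N) * N| ≤ N := by
    rw [key, abs_mul, abs_of_pos hNq]
    nlinarith [abs_sub_nint_le ((A : ℚ) / N)]
  exact_mod_cast hq

lemma l1_nonneg (z : GaussianInt) : 0 ≤ l1 z := by
  unfold l1; positivity

lemma linf_nonneg (z : GaussianInt) : 0 ≤ linf z := le_max_of_le_left (abs_nonneg _)

lemma linf_mul_le (e z : GaussianInt) : linf (e * z) ≤ linf e * l1 z := by
  have hre : |e.re| ≤ linf e := le_max_left _ _
  have him : |e.im| ≤ linf e := le_max_right _ _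
  have hz := abs_nonneg z.re
  have hz' := abs_nonneg z.im
  refine max_le ?_ ?_ <;> simp only [Zsqrtd.re_mul, Zsqrtd.im_mul, l1]
  · calc |e.re * z.re + -1 * e.im * z.im| ≤ |e.re| * |z.re| + |e.im| * |z.im| := by
          simpa [abs_mul, sub_eq_add_neg] using abs_sub (e.re * z.re) (e.im * z.im)
      _ ≤ _ := by nlinarith
  · calc |e.re * z.im + e.im * z.re| ≤ |e.re| * |z.im| + |e.im| * |z.re| := by
          simpa [abs_mul] using abs_add_le (e.re * z.im) (e.im * z.re)
      _ ≤ _ := by nlinarith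

lemma linf_one_add_I_mul (z : GaussianInt) : linf (⟨1, 1⟩ * z) = l1 z := by
  simp only [linf, l1, Zsqrtd.re_mul, Zsqrtd.im_mul, Int.abs_eq_natAbs]
  omega

lemma l1_one_add_I_mul (z : GaussianInt) : l1 (⟨1, 1⟩ * z) = 2 * linf z := by
  simp only [linf, l1, Zsqrtd.re_mul, Zsqrtd.im_mul, Int.abs_eq_natAbs]
  omega

lemma l1_mul_le (e z : GaussianInt) : l1 (e * z) ≤ 2 * linf e * linf z := by
  calc l1 (e * z) = linf (e * (⟨1, 1⟩ * z)) := by rw [← linf_one_add_I_mul, mul_left_comm]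
    _ ≤ linf e * l1 (⟨1, 1⟩ * z) := linf_mul_le _ _
    _ = 2 * linf e * linf z := by rw [l1_one_add_I_mul]; ring

lemma l1_intCast_mul (n : ℤ) (z : GaussianInt) : l1 (n * z) = |n| * l1 z := by
  simp [l1, Zsqrtd.re_mul, Zsqrtd.im_mul, abs_mul, mul_add]

lemma linf_intCast_mul (n : ℤ) (z : GaussianInt) : linf (n * z) = |n| * linf z := by
  simp [linf, Zsqrtd.re_mul, Zsqrtd.im_mul, abs_mul, mul_max_of_nonneg _ _ (abs_nonneg n)]

lemma Nm_pos {b : GaussianInt} (hb : b ≠ 0) : 0 < Nm b := by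
  have := GaussianInt.norm_pos.mpr hb
  rw [Zsqrtd.norm_def] at this
  unfold Nm; linarith

/-- The rounding error of the Gauss quotient, scaled by `Nm b`. -/
def gaussErr (a b : GaussianInt) : GaussianInt := a * star b - gq a b * (Nm b : GaussianInt)

lemma gaussErr_mul (a b : GaussianInt) : gaussErr a b * b = (Nm b : GaussianInt) * gr a b := by
  have : star b * b = (Nm b : GaussianInt) := by
    rw [mul_comm, ← Zsqrtd.norm_eq_mul_conj, Zsqrtd.norm_def, Nm]; push_cast; ring
  rw [gaussErr, gr, sub_mul, mul_assoc, this]; ring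

lemma two_mul_linf_gaussErr_le (a b : GaussianInt) (hb : b ≠ 0) :
    2 * linf (gaussErr a b) ≤ Nm b := by
  have hre : (gaussErr a b).re = a.re * b.re + a.im * b.im - (gq a b).re * Nm b := by
    simp [gaussErr, Zsqrtd.re_mul]
  have him : (gaussErr a b).im = a.im * b.re - a.re * b.im - (gq a b).im * Nm b := by
    simp [gaussErr, Zsqrtd.im_mul]; ring
  rw [linf, mul_max_of_nonneg _ _ zero_le_two, hre, him]
  exact max_le (two_mul_abs_sub_nint_div_mul_le _ _ (Nm_pos hb))
    (two_mul_abs_sub_nint_div_mul_le _ _ (Nm_pos hb))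

theorem stmt2_general (a b : GaussianInt) (hb : b ≠ 0) :
    l1 (gr a b) ≤ linf b ∧ (linf (gr a b) : ℚ) ≤ (l1 b : ℚ) / 2 := by
  have hN := Nm_pos hb
  have herr := two_mul_linf_gaussErr_le a b hb
  have hl1 : Nm b * l1 (gr a b) ≤ Nm b * linf b :=
    calc Nm b * l1 (gr a b) = l1 (gaussErr a b * b) := by
          rw [gaussErr_mul, l1_intCast_mul, abs_of_pos hN]
      _ ≤ 2 * linf (gaussErr a b) * linf b := l1_mul_le _ _
      _ ≤ Nm b * linf b := mul_le_mul_of_nonneg_right herr (linf_nonneg b)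
  have hlinf : Nm b * (2 * linf (gr a b)) ≤ Nm b * l1 b :=
    calc Nm b * (2 * linf (gr a b)) = 2 * linf (gaussErr a b * b) := by
          rw [gaussErr_mul, linf_intCast_mul, abs_of_pos hN]; ring
      _ ≤ 2 * linf (gaussErr a b) * l1 b := by
          rw [mul_assoc]; exact mul_le_mul_of_nonneg_left (linf_mul_le _ _) zero_le_two
      _ ≤ Nm b * l1 b := mul_le_mul_of_nonneg_right herr (l1_nonneg b)
  refine ⟨le_of_mul_le_mul_left hl1 hN, ?_⟩
  have h2 : ((2 * linf (gr a b) : ℤ) : ℚ) ≤ l1 b := mod_cast le_of_mul_le_mul_left hlinf hN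
  push_cast at h2
  linarith

theorem stmt2 (a b : GaussianInt) (ha : a ≠ 0) (hb : b ≠ 0) :
    l1 (gr a b) ≤ linf b ∧ (linf (gr a b) : ℚ) ≤ (l1 b : ℚ) / 2 :=
  stmt2_general a b hb
end
end

section
/- If r is the Gauss remainder of nonzero a, b ∈ ℤ[i] and the Gauss fractional remainder f = a/b - q satisfies Re(f), Im(f) ∈ {0, ±1/2} up to multiplication by a unit (i.e., r/b ∈ {±1/2, ±i/2, (±1±i)/2}), then r/b lies in the set of unit multiples of (1+i)⁻¹ and (1+i)⁻², and hence φ(r) ∈ {φ(b) - 1, φ(b) - 2}. -/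
open GaussianInt

noncomputable section

/-!
Since `2 = -i (1 + i)²`, the hypothesis says `b = iᵐ (1 + i)ᵉ r` with `e ∈ {1, 2}`, and it remains
to see that `φ` is invariant under multiplication by `i` and rises by one under multiplication by
`1 + i`. Graves' formula only sees `|Re z|` and `|Im z|` up to swapping, and it rises by two under
`z ↦ 2z`. When `v2 z = 0` it says exactly `φ z ≤ k ↔ ‖z‖∞ ≤ w k - 2 ∧ ‖z‖₁ ≤ w (k + 1) - 3`.
Multiplication by `1 + i` turns `(‖z‖∞, ‖z‖₁)` into `(‖z‖₁, 2‖z‖∞)`, and `w (k + 2) = 2 w k`; with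
a parity argument this gives `φ ((1 + i) z) = φ z + 1` when `Re z + Im z` is odd. If both
coordinates are odd then `z = -i (1 + i) y` with `Re y + Im y` odd, and if both are even we halve.
-/


lemma w_add_two (n : ℕ) : w (n + 2) = 2 * w n := by
  unfold w
  rw [Nat.add_mod_right, Nat.add_div_right _ two_pos]
  split_ifs <;> ring

lemma w_lt_succ : ∀ n, w n < w (n + 1)
  | 0 => by norm_num [w]
  | 1 => by norm_num [w]
  | n + 2 => by rw [w_add_two, w_add_two (n + 1)]; linarith [w_lt_succ n]

lemma w_mono : Monotone w := monotone_nat_of_le_succ fun n => (w_lt_succ n).le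

lemma even_w_succ : ∀ n, Even (w (n + 1))
  | 0 => by norm_num [w]
  | n + 1 => by rw [w_add_two]; exact even_two_mul _

lemma add_three_le_w : ∀ n : ℕ, (n : ℤ) + 3 ≤ w n
  | 0 => by norm_num [w]
  | n + 1 => by push_cast; linarith [add_three_le_w n, w_lt_succ n]

lemma Nat.sInf_le_iff_of_upward {p : ℕ → Prop} (hp : ∀ m k, m ≤ k → p m → p k)
    (hne : ∃ n, p n) (k : ℕ) : sInf {n | p n} ≤ k ↔ p k :=
  ⟨fun h => hp _ k h (Nat.sInf_mem hne), fun h => Nat.sInf_le h⟩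

lemma l1_le_two_mul_linf (z : GaussianInt) : l1 z ≤ 2 * linf z := by
  unfold l1 linf; linarith [le_max_left |z.re| |z.im|, le_max_right |z.re| |z.im|]

lemma phi_le_iff {z : GaussianInt} (hz : v2 z = 0) (k : ℕ) :
    phi z ≤ k ↔ linf z ≤ w k - 2 ∧ l1 z ≤ w (k + 1) - 3 := by
  have hset : {n : ℕ | |z.re| ≤ w n - 2 ∧ |z.im| ≤ w n - 2} = {n | linf z ≤ w n - 2} := by
    simp only [linf, max_le_iff]
  have hn := Nat.sInf_le_iff_of_upward (p := fun n => linf z ≤ w n - 2)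
    (fun m k hmk h => h.trans (by linarith [w_mono hmk]))
    ⟨(linf z).toNat, by linarith [add_three_le_w (linf z).toNat, Int.self_le_toNat (linf z)]⟩
  have hphi : phi z = if l1 z ≤ w (sInf {n | linf z ≤ w n - 2} + 1) - 3
      then sInf {n | linf z ≤ w n - 2} else sInf {n | linf z ≤ w n - 2} + 1 := by
    simp only [phi, hz, pow_zero, one_mul, mul_zero, add_zero, hset]
  rw [hphi]
  generalize sInf {n | linf z ≤ w n - 2} = n at hn
  constructor
  · intro h
    split_ifs at h with hl
    · exact ⟨(hn k).1 h, hl.trans (by linarith [w_mono (Nat.succ_le_succ h)])⟩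
    · -- `l1 z ≤ 2 * linf z ≤ 2 * (w n - 2) = w (n + 2) - 4`
      obtain ⟨k, rfl⟩ : ∃ j, k = j + 1 := ⟨k - 1, by omega⟩
      have hM := (hn n).1 le_rfl
      have := w_mono (show n + 2 ≤ k + 1 + 1 by omega)
      refine ⟨(hn _).1 (by omega), ?_⟩
      linarith [w_add_two n, l1_le_two_mul_linf z]
  · rintro ⟨hM, hl⟩
    have hnk := (hn k).2 hM
    split_ifs
    · exact hnk
    · exact hnk.lt_of_ne (by rintro rfl; contradiction)

lemma v2_eq_zero_of_not_dvd {z : GaussianInt} (h : ¬((2 : ℤ) ∣ z.re ∧ (2 : ℤ) ∣ z.im)) :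
    v2 z = 0 := by
  refine padicValNat.eq_zero_of_not_dvd fun hd => h ?_
  have h2 : (2 : ℤ) ∣ (Int.gcd z.re z.im : ℤ) := Int.natCast_dvd_natCast.mpr hd
  exact ⟨h2.trans (Int.gcd_dvd_left _ _), h2.trans (Int.gcd_dvd_right _ _)⟩

lemma two_mul_re (z : GaussianInt) : (2 * z).re = 2 * z.re := by simp [Zsqrtd.re_mul]

lemma two_mul_im (z : GaussianInt) : (2 * z).im = 2 * z.im := by simp [Zsqrtd.im_mul]

lemma v2_two_mul {z : GaussianInt} (hz : z ≠ 0) : v2 (2 * z) = v2 z + 1 := by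
  have hg : Int.gcd z.re z.im ≠ 0 := by
    rw [Ne, Int.gcd_eq_zero_iff]
    exact fun ⟨h1, h2⟩ => hz (Zsqrtd.ext h1 h2)
  rw [v2, two_mul_re, two_mul_im, Int.gcd_mul_left, show (2 : ℤ).natAbs = 2 from rfl,
    padicValNat.mul two_ne_zero hg, padicValNat.self one_lt_two, add_comm, v2]

lemma phi_two_mul {z : GaussianInt} (hz : z ≠ 0) : phi (2 * z) = phi z + 2 := by
  have hscale : ∀ (x : ℤ) (j : ℕ) (c : ℤ), 2 * x ≤ 2 ^ (j + 1) * c ↔ x ≤ 2 ^ j * c := by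
    intro x j c
    rw [pow_succ, mul_comm _ 2, mul_assoc]
    exact mul_le_mul_iff_right₀ two_pos
  have hl1 : l1 (2 * z) = 2 * l1 z := by
    simp only [l1, two_mul_re, two_mul_im, abs_mul, abs_two]; ring
  simp only [phi, v2_two_mul hz, hl1, two_mul_re, two_mul_im, abs_mul, abs_two, hscale]
  split_ifs <;> ring

lemma phi_Ii_mul (z : GaussianInt) : phi (Ii * z) = phi z := by
  have hre : (Ii * z).re = -z.im := by simp [Ii]
  have him : (Ii * z).im = z.re := by simp [Ii]
  have hv : v2 (Ii * z) = v2 z := by rw [v2, v2, hre, him, Int.neg_gcd, Int.gcd_comm]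
  simp only [phi, hv, l1, hre, him, abs_neg, and_comm, add_comm]

lemma phi_Ii_pow_mul (m : ℕ) (z : GaussianInt) : phi (Ii ^ m * z) = phi z := by
  induction m with
  | zero => rw [pow_zero, one_mul]
  | succ m ih => rw [pow_succ', mul_assoc, phi_Ii_mul, ih]

lemma one_add_Ii_mul_re (z : GaussianInt) : ((1 + Ii) * z).re = z.re - z.im := by
  simp [Ii]; ring

lemma one_add_Ii_mul_im (z : GaussianInt) : ((1 + Ii) * z).im = z.re + z.im := by
  simp [Ii]; ring

lemma linf_one_add_Ii_mul (z : GaussianInt) : linf ((1 + Ii) * z) = l1 z := by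
  simp only [linf, l1, one_add_Ii_mul_re, one_add_Ii_mul_im, abs_eq_max_neg]; omega

lemma l1_one_add_Ii_mul (z : GaussianInt) : l1 ((1 + Ii) * z) = 2 * linf z := by
  simp only [linf, l1, one_add_Ii_mul_re, one_add_Ii_mul_im, abs_eq_max_neg]; omega

lemma l1_emod_two (z : GaussianInt) : l1 z % 2 = (z.re + z.im) % 2 := by
  simp only [l1, abs_eq_max_neg]; omega

lemma one_add_Ii_ne_zero : (1 + Ii : GaussianInt) ≠ 0 := fun h => by
  simpa [Ii] using congrArg Zsqrtd.im h

lemma phi_one_add_Ii_mul_of_odd {z : GaussianInt} (hz : Odd (z.re + z.im)) :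
    phi ((1 + Ii) * z) = phi z + 1 := by
  rw [Int.odd_iff] at hz
  have hv : v2 z = 0 := v2_eq_zero_of_not_dvd (by omega)
  have hv' : v2 ((1 + Ii) * z) = 0 :=
    v2_eq_zero_of_not_dvd (by rw [one_add_Ii_mul_im]; omega)
  have hS := l1_le_two_mul_linf z
  have hSodd := l1_emod_two z
  refine eq_of_forall_ge_iff fun k => ?_
  rw [phi_le_iff hv', linf_one_add_Ii_mul, l1_one_add_Ii_mul]
  rcases k with _ | k
  · have : 0 ≤ l1 z := add_nonneg (abs_nonneg z.re) (abs_nonneg z.im)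
    norm_num [w]
    omega
  · obtain ⟨t, ht⟩ := even_w_succ k
    rw [add_le_add_iff_right, phi_le_iff hv, w_add_two]
    omega

theorem phi_one_add_Ii_mul {z : GaussianInt} (hz : z ≠ 0) : phi ((1 + Ii) * z) = phi z + 1 := by
  by_cases heven : (2 : ℤ) ∣ z.re ∧ (2 : ℤ) ∣ z.im
  · obtain ⟨⟨c, hc⟩, ⟨d, hd⟩⟩ := heven
    have hzy : z = 2 * ⟨c, d⟩ :=
      Zsqrtd.ext (by rw [two_mul_re]; exact hc) (by rw [two_mul_im]; exact hd)
    have hy : (⟨c, d⟩ : GaussianInt) ≠ 0 := fun h => hz (by rw [hzy, h, mul_zero])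
    rw [hzy, mul_left_comm, phi_two_mul (mul_ne_zero one_add_Ii_ne_zero hy), phi_two_mul hy,
      phi_one_add_Ii_mul hy]
  · by_cases hodd : Odd (z.re + z.im)
    · exact phi_one_add_Ii_mul_of_odd hodd
    · rw [Int.not_odd_iff] at hodd
      set y : GaussianInt := ⟨(z.re - z.im) / 2, (z.re + z.im) / 2⟩
      have hy : Odd (y.re + y.im) := by rw [Int.odd_iff]; simp only [y]; omega
      have hzy : z = Ii ^ 3 * ((1 + Ii) * y) := by
        ext <;> simp [y, Ii, pow_succ] <;> omega
      have h2y : (1 + Ii) * z = 2 * y := by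
        ext <;> simp [y, Ii] <;> omega
      have hy0 : y ≠ 0 := fun h => hz (by rw [hzy, h, mul_zero, mul_zero])
      rw [h2y, phi_two_mul hy0, hzy, phi_Ii_pow_mul, phi_one_add_Ii_mul_of_odd hy]
termination_by v2 z
decreasing_by
  rw [hzy, v2_two_mul hy]
  exact Nat.lt_succ_self _

lemma phi_one_add_Ii_pow_mul (e : ℕ) {z : GaussianInt} (hz : z ≠ 0) :
    phi ((1 + Ii) ^ e * z) = phi z + e := by
  induction e with
  | zero => rw [pow_zero, one_mul, add_zero]
  | succ e ih =>
    rw [pow_succ', mul_assoc, phi_one_add_Ii_mul (mul_ne_zero (pow_ne_zero e one_add_Ii_ne_zero) hz),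
      ih, add_assoc]

lemma Ii_mul_Ii : Ii * Ii = -1 := by ext <;> simp [Ii]

lemma Ii_pow_four : Ii ^ 4 = 1 := by
  rw [show 4 = 2 * 2 from rfl, pow_mul, sq Ii, Ii_mul_Ii]
  norm_num

lemma isUnit_Ii : IsUnit Ii := IsUnit.of_mul_eq_one (-Ii) (by rw [mul_neg, Ii_mul_Ii, neg_neg])

/-- Here `2 = Ii ^ 3 * (1 + Ii) ^ 2` and each `c` is `Ii ^ k` or `Ii ^ k * (1 + Ii)`. -/
lemma eq_Ii_pow_mul_one_add_Ii_pow_mul {b r c : GaussianInt}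
    (hc : c ∈ ({1, -1, Ii, -Ii, 1 + Ii, 1 - Ii, -1 + Ii, -1 - Ii} : Set GaussianInt))
    (h : 2 * r = c * b) : ∃ m e : ℕ, (e = 1 ∨ e = 2) ∧ b = Ii ^ m * ((1 + Ii) ^ e * r) := by
  have := Ii_mul_Ii
  simp only [Set.mem_insert_iff, Set.mem_singleton_iff] at hc
  rcases hc with rfl | rfl | rfl | rfl | rfl | rfl | rfl | rfl
  exacts [⟨3, 2, by grind⟩, ⟨1, 2, by grind⟩, ⟨2, 2, by grind⟩, ⟨0, 2, by grind⟩,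
    ⟨3, 1, by grind⟩, ⟨0, 1, by grind⟩, ⟨2, 1, by grind⟩, ⟨1, 1, by grind⟩]

theorem stmt3_general (b r : GaussianInt) (hb : b ≠ 0)
    (hhalf : ∃ c ∈ ({1, -1, Ii, -Ii, 1 + Ii, 1 - Ii, -1 + Ii, -1 - Ii} : Set GaussianInt),
      2 * r = c * b) :
    (∃ u : GaussianInt, IsUnit u ∧ (r * (1 + Ii) = u * b ∨ r * (1 + Ii) ^ 2 = u * b)) ∧
    (phi r + 1 = phi b ∨ phi r + 2 = phi b) := by
  obtain ⟨c, hc, h2r⟩ := hhalf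
  obtain ⟨m, e, he, hbr⟩ := eq_Ii_pow_mul_one_add_Ii_pow_mul hc h2r
  have hr : r ≠ 0 := by rintro rfl; simp [hbr] at hb
  have hrb : r * (1 + Ii) ^ e = Ii ^ (3 * m) * b := by
    rw [hbr, ← mul_assoc, ← pow_add, show 3 * m + m = 4 * m by ring, pow_mul, Ii_pow_four,
      one_pow, one_mul, mul_comm]
  have hphi : phi b = phi r + e := by rw [hbr, phi_Ii_pow_mul, phi_one_add_Ii_pow_mul e hr]
  refine ⟨⟨Ii ^ (3 * m), isUnit_Ii.pow _, ?_⟩, ?_⟩ <;> rcases he with rfl | rfl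
  exacts [Or.inl (by simpa using hrb), Or.inr hrb, Or.inl hphi.symm, Or.inr hphi.symm]

theorem stmt3 (a b r : GaussianInt) (ha : a ≠ 0) (hb : b ≠ 0) (hr : r = gr a b)
    (hhalf : ∃ c ∈ ({1, -1, Ii, -Ii, 1 + Ii, 1 - Ii, -1 + Ii, -1 - Ii} : Set GaussianInt),
      2 * r = c * b) :
    (∃ u : GaussianInt, IsUnit u ∧ (r * (1 + Ii) = u * b ∨ r * (1 + Ii) ^ 2 = u * b)) ∧
    (phi r + 1 = phi b ∨ phi r + 2 = phi b) :=
  stmt3_general b r hb hhalf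
end
end

section
/- If z ∈ ℤ[i] is nonzero and φ(z) > n - 1, then ℓ∞(z) > w_{n-1} - 2^{v₂(z)+1} or ℓ₁(z) > wₙ - 3·2^{v₂(z)}, and conversely. -/
open GaussianInt

noncomputable section

lemma w_add_two_mul (m j : ℕ) : w (m + 2 * j) = 2 ^ j * w m := by
  induction j with
  | zero => simp
  | succ k ih => rw [show m + 2 * (k + 1) = m + 2 * k + 2 by omega, w_add_two, ih, pow_succ]; ring

lemma three_le_w (n : ℕ) : 3 ≤ w n := by
  have hpow : (1 : ℤ) ≤ 2 ^ (n / 2) := one_le_pow₀ (by norm_num)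
  unfold w
  split_ifs <;> linarith

lemma linf_pos {z : GaussianInt} (hz : z ≠ 0) : 0 < linf z := by
  have hcoord : z.re ≠ 0 ∨ z.im ≠ 0 := by
    by_contra! h
    exact hz (Zsqrtd.ext h.1 h.2)
  rcases hcoord with h | h
  · exact (abs_pos.mpr h).trans_le (le_max_left _ _)
  · exact (abs_pos.mpr h).trans_le (le_max_right _ _)

/-- The index `n` in the formula for `φ`. -/
def phiLevel (z : GaussianInt) : ℕ :=
  sInf {n : ℕ | |z.re| ≤ 2 ^ v2 z * (w n - 2) ∧ |z.im| ≤ 2 ^ v2 z * (w n - 2)}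

lemma phi_eq (z : GaussianInt) :
    phi z = if l1 z ≤ 2 ^ v2 z * (w (phiLevel z + 1) - 3) then phiLevel z + 2 * v2 z
      else phiLevel z + 2 * v2 z + 1 :=
  rfl

lemma exists_linf_le (z : GaussianInt) : ∃ n, linf z ≤ 2 ^ v2 z * (w n - 2) := by
  set k := (linf z).toNat
  have hw : w (2 * k) = 3 * 2 ^ k := by
    rw [← zero_add (2 * k), w_add_two_mul, show w 0 = 3 by rfl, mul_comm]
  have hk : (k : ℤ) < 2 ^ k := by exact_mod_cast Nat.lt_two_pow_self
  have hpow : (1 : ℤ) ≤ 2 ^ k := one_le_pow₀ (by norm_num)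
  refine ⟨2 * k, ?_⟩
  calc linf z ≤ k := Int.self_le_toNat _
    _ ≤ w (2 * k) - 2 := by rw [hw]; linarith
    _ ≤ 2 ^ v2 z * (w (2 * k) - 2) :=
        le_mul_of_one_le_left (by linarith [three_le_w (2 * k)]) (one_le_pow₀ (by norm_num))

lemma linf_le_iff_phiLevel_le (z : GaussianInt) (m : ℕ) :
    linf z ≤ 2 ^ v2 z * (w m - 2) ↔ phiLevel z ≤ m := by
  have hset : {n : ℕ | |z.re| ≤ 2 ^ v2 z * (w n - 2) ∧ |z.im| ≤ 2 ^ v2 z * (w n - 2)} =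
      {n | linf z ≤ 2 ^ v2 z * (w n - 2)} := by
    ext n
    simp only [Set.mem_ofPred_eq, linf, max_le_iff]
  have hne :
      {n : ℕ | |z.re| ≤ 2 ^ v2 z * (w n - 2) ∧ |z.im| ≤ 2 ^ v2 z * (w n - 2)}.Nonempty := by
    rw [hset]
    exact exists_linf_le z
  have hmem : phiLevel z ∈ {n | linf z ≤ 2 ^ v2 z * (w n - 2)} := hset ▸ Nat.sInf_mem hne
  constructor
  · intro h
    exact Nat.sInf_le (hset ▸ h)
  · intro h
    exact hmem.out.trans (mul_le_mul_of_nonneg_left (by linarith [w_mono h]) (by positivity))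

lemma l1_lt_of_phiLevel_le {z : GaussianInt} {m : ℕ} (h : phiLevel z ≤ m) :
    l1 z < 2 ^ v2 z * (w (m + 2) - 3) := by
  have hlinf := (linf_le_iff_phiLevel_le z m).mpr h
  have hpos : (0 : ℤ) < 2 ^ v2 z := by positivity
  rw [w_add_two]
  nlinarith [l1_le_two_mul_linf z]

lemma lt_phi_iff (z : GaussianInt) (k : ℕ) :
    k + 2 * v2 z < phi z ↔
      2 ^ v2 z * (w k - 2) < linf z ∨ 2 ^ v2 z * (w (k + 1) - 3) < l1 z := by
  have hpos : (0 : ℤ) < 2 ^ v2 z := by positivity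
  have hlinf : 2 ^ v2 z * (w k - 2) < linf z ↔ k < phiLevel z := by
    rw [← not_le, linf_le_iff_phiLevel_le, not_le]
  rw [hlinf, phi_eq]
  split_ifs with hl
  · refine ⟨fun h => Or.inl (by omega), ?_⟩
    rintro (h | h)
    · omega
    · by_contra! hNk
      have hw := w_mono (show phiLevel z + 1 ≤ k + 1 by omega)
      nlinarith
  · constructor
    · intro h
      rcases Nat.lt_or_ge k (phiLevel z) with hk | hk
      · exact Or.inl hk
      · obtain rfl : k = phiLevel z := by omega
        exact Or.inr (not_le.mp hl)
    · rintro (h | h)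
      · omega
      · by_contra! hNk
        have hl1 := l1_lt_of_phiLevel_le (z := z) (m := k - 1) (by omega)
        rw [show k - 1 + 2 = k + 1 by omega] at hl1
        linarith

theorem stmt6 (z : GaussianInt) (hz : z ≠ 0) (n : ℕ) (hn : 1 ≤ n) :
    phi z > n - 1 ↔
      (linf z > w (n - 1) - 2 ^ (v2 z + 1) ∨ l1 z > w n - 3 * 2 ^ (v2 z)) := by
  rcases Nat.lt_or_ge (2 * v2 z) n with hlarge | hsmall
  · obtain ⟨k, rfl⟩ : ∃ k, n = k + 2 * v2 z + 1 := ⟨n - 2 * v2 z - 1, by omega⟩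
    have hw : w (k + 2 * v2 z + 1) = 2 ^ v2 z * w (k + 1) := by
      rw [show k + 2 * v2 z + 1 = k + 1 + 2 * v2 z by omega, w_add_two_mul]
    rw [gt_iff_lt, Nat.add_sub_cancel, lt_phi_iff, w_add_two_mul, hw, pow_succ]
    constructor <;> rintro (h | h) <;> [left; right; left; right] <;> linarith
  · have hw : w (n - 1) ≤ 2 ^ (v2 z + 1) := by
      calc w (n - 1) ≤ w (1 + 2 * (v2 z - 1)) := w_mono (by omega)
        _ = 2 ^ (v2 z + 1) := by
          rw [w_add_two_mul, show w 1 = 4 by rfl, show v2 z + 1 = v2 z - 1 + 2 by omega, pow_add]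
          ring
    have hphi : 2 * v2 z ≤ phi z := by rw [phi_eq]; split_ifs <;> omega
    exact iff_of_true (by omega) (Or.inl (by linarith [linf_pos hz]))
end
end

section
/- Suppose r is the nonzero Gauss remainder of nonzero a, b ∈ ℤ[i] with φ(r) ≥ φ(b) = n and Im(u_b·b)·Im(u_r·r) < 0. Then u_b·b - u_r·r has real part ℓ∞(b) - ℓ∞(r) and imaginary part ±(m(b) + m(r)), and u_b·b + s(r)·i·u_r·r has real part ℓ∞(b) - m(r) and imaginary part ±(m(b) - ℓ∞(r)), where m(z) = min(|Re z|,|Im z|), ℓ∞(z) = max(|Re z|,|Im z|), and s(r) = sgn(Im(u_r·r)). -/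
open GaussianInt

noncomputable section

/-! The canonical unit moves z to u_z·z with real part ℓ∞(z) and imaginary part ±m(z). Since
Im(u_b·b) and Im(u_r·r) have opposite signs, their absolute values add in the difference, and
Im(u_b·b) = -s(r)·m(b), so Im(u_b·b + s(r)·i·u_r·r) = -s(r)·(m(b) - ℓ∞(r)). -/

lemma re_uz_mul_self (z : GaussianInt) : (uz z * z).re = linf z := by
  obtain ⟨x, y⟩ := z
  simp only [uz, linf, Ii]
  split_ifs <;> simp only [Zsqrtd.re_mul, Zsqrtd.re_neg, Zsqrtd.re_one, Zsqrtd.im_neg,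
    Zsqrtd.im_one, Int.abs_eq_natAbs] at * <;> omega

lemma abs_im_uz_mul_self (z : GaussianInt) : |(uz z * z).im| = mm z := by
  obtain ⟨x, y⟩ := z
  simp only [uz, mm, Ii]
  split_ifs <;> simp only [Zsqrtd.im_mul, Zsqrtd.re_neg, Zsqrtd.re_one, Zsqrtd.im_neg,
    Zsqrtd.im_one, Int.abs_eq_natAbs] at * <;> omega

lemma Ii_mul (z : GaussianInt) : Ii * z = ⟨-z.im, z.re⟩ := by
  ext <;> simp [Ii]

lemma abs_sub_eq_abs_add_abs_of_mul_neg {α : Type*} [Ring α] [LinearOrder α]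
    [IsStrictOrderedRing α] {x y : α} (h : x * y < 0) : |x - y| = |x| + |y| := by
  rw [sub_eq_add_neg, ← abs_neg y, abs_add_eq_add_abs_iff, neg_nonneg, neg_nonpos]
  rcases mul_neg_iff.mp h with ⟨hx, hy⟩ | ⟨hx, hy⟩
  · exact .inl ⟨hx.le, hy.le⟩
  · exact .inr ⟨hx.le, hy.le⟩

lemma Int.abs_add_sign_mul_eq_abs_abs_sub_of_mul_neg {x y : ℤ} (h : x * y < 0) (c : ℤ) :
    |x + y.sign * c| = |(|x| - c)| := by
  rcases mul_neg_iff.mp h with ⟨hx, hy⟩ | ⟨hx, hy⟩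
  · rw [Int.sign_eq_neg_one_of_neg hy, abs_of_pos hx]
    congr 1; ring
  · rw [Int.sign_eq_one_of_pos hy, abs_of_neg hx, ← abs_neg]
    congr 1; ring

theorem stmt17_general (b r : GaussianInt)
    (him : (uz b * b).im * (uz r * r).im < 0) :
    ((uz b * b - uz r * r).re = linf b - linf r ∧
      ((uz b * b - uz r * r).im = mm b + mm r ∨ (uz b * b - uz r * r).im = -(mm b + mm r))) ∧
    ((uz b * b + sfun r • (Ii * (uz r * r))).re = linf b - mm r ∧
      ((uz b * b + sfun r • (Ii * (uz r * r))).im = mm b - linf r ∨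
        (uz b * b + sfun r • (Ii * (uz r * r))).im = -(mm b - linf r))) := by
  rw [sfun, ← abs_eq_abs, ← abs_eq_abs, ← re_uz_mul_self b, ← re_uz_mul_self r,
    ← abs_im_uz_mul_self b, ← abs_im_uz_mul_self r]
  generalize uz b * b = B at *
  generalize uz r * r = R at *
  simp only [Zsqrtd.re_sub, Zsqrtd.im_sub, Zsqrtd.re_add, Zsqrtd.im_add, zsmul_eq_mul,
    Zsqrtd.re_smul, Zsqrtd.im_smul, Ii_mul]
  refine ⟨⟨trivial, ?_⟩, ?_, ?_⟩
  · rw [abs_sub_eq_abs_add_abs_of_mul_neg him,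
      abs_of_nonneg (a := |B.im| + |R.im|) (by positivity)]
  · rw [mul_neg, Int.sign_mul_self_eq_abs, sub_eq_add_neg]
  · exact Int.abs_add_sign_mul_eq_abs_abs_sub_of_mul_neg him _

theorem stmt17 (a b r : GaussianInt) (n : ℕ) (ha : a ≠ 0) (hb : b ≠ 0) (hr : r = gr a b)
    (hr0 : r ≠ 0) (hphi : phi r ≥ phi b) (hn : phi b = n)
    (him : (uz b * b).im * (uz r * r).im < 0) :
    ((uz b * b - uz r * r).re = linf b - linf r ∧
      ((uz b * b - uz r * r).im = mm b + mm r ∨ (uz b * b - uz r * r).im = -(mm b + mm r))) ∧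
    ((uz b * b + sfun r • (Ii * (uz r * r))).re = linf b - mm r ∧
      ((uz b * b + sfun r • (Ii * (uz r * r))).im = mm b - linf r ∨
        (uz b * b + sfun r • (Ii * (uz r * r))).im = -(mm b - linf r))) :=
  stmt17_general b r him
end
end
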